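/- arXiv:2103.06731 — 2 statements merged into one kernel-verified Lean document; each statement's English description precedes it below -/
import Mathlib

section
/- Coulomb correlation density conservation: if d : ℝ → M₄(ℂ) is a self-consistent trajectory, then the Coulomb correlation density Tr(d(t)·n↑n↓) is independent of t ∈ ℝ, is a real number, and lies in the interval [0,1]. -/
open Matrix
open scoped ComplexOrder

noncomputable section

/-- `M₄(ℂ)`, the algebra of 4×4 complex matrices, identified with the linear
operators on the one-site fermionic Fock space `ℂ⁴`. -/
abbrev M4 : Type := Matrix (Fin 4) (Fin 4) ℂ

noncomputable instance : NormedAddCommGroup M4 := Matrix.normedAddCommGroup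
noncomputable instance : NormedSpace ℝ M4 := Matrix.normedSpace

/-- The canonical anticommutation relations for the two matrices `A↑ = Aup`,
`A↓ = Adn`: `Aₛ·Aₜ + Aₜ·Aₛ = 0` and `Aₛ·Aₜ* + Aₜ*·Aₛ = δ_{s,t}·1` for
`s, t ∈ {↑,↓}`. -/
def CAR (Aup Adn : M4) : Prop :=
  Aup * Aup + Aup * Aup = 0 ∧
  Aup * Adn + Adn * Aup = 0 ∧
  Adn * Adn + Adn * Adn = 0 ∧
  Aup * Aupᴴ + Aupᴴ * Aup = 1 ∧
  Aup * Adnᴴ + Adnᴴ * Aup = 0 ∧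
  Adn * Aupᴴ + Aupᴴ * Adn = 0 ∧
  Adn * Adnᴴ + Adnᴴ * Adn = 1

/-- `dh(c) := 2λ n↑n↓ − μ(n↑+n↓) − h(n↑−n↓) − γ(c·A↑*A↓* + c̄·A↓A↑)`,
where `nₛ := Aₛ*·Aₛ`. -/
def dh (Aup Adn : M4) (mu h lam gam : ℝ) (c : ℂ) : M4 :=
  (2 * lam : ℂ) • (Aupᴴ * Aup * (Adnᴴ * Adn))
    - (mu : ℂ) • (Aupᴴ * Aup + Adnᴴ * Adn)
    - (h : ℂ) • (Aupᴴ * Aup - Adnᴴ * Adn)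
    - (gam : ℂ) • (c • (Aupᴴ * Adnᴴ) + (starRingEnd ℂ c) • (Adn * Aup))

/-- A density matrix: Hermitian, positive semidefinite, of trace 1. -/
def IsDensityMatrix (d : M4) : Prop :=
  d.IsHermitian ∧ d.PosSemidef ∧ d.trace = 1

/-- A self-consistent trajectory: a differentiable map `d : ℝ → M₄(ℂ)` such that
`d t` is a density matrix for all `t` and
`d′(t) = −i·[dh(Tr(d(t)·A↓A↑)), d(t)]` for all `t ∈ ℝ`. -/
def SelfConsistent (Aup Adn : M4) (mu h lam gam : ℝ) (d : ℝ → M4) : Prop :=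
  (∀ t : ℝ, IsDensityMatrix (d t)) ∧
  ∀ t : ℝ, HasDerivAt d
      ((-Complex.I) •
        (dh Aup Adn mu h lam gam ((d t * (Adn * Aup)).trace) * d t
          - d t * dh Aup Adn mu h lam gam ((d t * (Adn * Aup)).trace))) t

/-! The number operators `nₛ = Aₛ*Aₛ` are commuting star projections by the CAR, hence so is
`N = n↑n↓`, and `0 ≤ Tr(d N) ≤ Tr(d) = 1` for every density matrix `d`.
`N` commutes with every term of `dh(c)` except the pairing term, and
`[N, dh(c)] = γ (c̄ A↓A↑ − c A↑*A↓*)`. Along the flow,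
`d/dt Tr(d N) = −i Tr(d [N, dh(c)])`, which vanishes at the self-consistent value
`c = Tr(d A↓A↑)` because `d` is Hermitian, so that `Tr(d A↑*A↓*) = c̄`. -/

theorem eq_zero_of_add_self_eq_zero (K : Type*) {M : Type*} [DivisionRing K] [CharZero K]
    [AddCommGroup M] [Module K M] {x : M} (h : x + x = 0) : x = 0 :=
  (smul_eq_zero.mp ((two_smul K x).trans h)).resolve_left two_ne_zero

theorem commute_mul_of_anticommute {R : Type*} [Ring R] {x y z : R}
    (hy : x * y + y * x = 0) (hz : x * z + z * x = 0) : Commute x (y * z) :=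
  calc x * (y * z) = -(y * (x * z)) := by
        rw [← mul_assoc, eq_neg_of_add_eq_zero_left hy, neg_mul, mul_assoc]
    _ = y * z * x := by rw [eq_neg_of_add_eq_zero_left hz, mul_neg, neg_neg, mul_assoc]

section FermionMode

variable {R : Type*} [Ring R] [StarRing R] {a : R}

theorem star_mul_star_mul_self_eq_zero (hsq : a * a = 0) : star a * (star a * a) = 0 := by
  rw [← mul_assoc, ← star_mul, hsq, star_zero, zero_mul]

theorem star_mul_self_mul_star (hsq : a * a = 0) (hcar : a * star a + star a * a = 1) :
    star a * a * star a = star a := by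
  rw [mul_assoc, eq_sub_of_add_eq hcar, mul_sub, mul_one, star_mul_star_mul_self_eq_zero hsq,
    sub_zero]

theorem isStarProjection_star_mul_self (hsq : a * a = 0) (hcar : a * star a + star a * a = 1) :
    IsStarProjection (star a * a) where
  isSelfAdjoint := .star_mul_self a
  isIdempotentElem := by rw [IsIdempotentElem, ← mul_assoc, star_mul_self_mul_star hsq hcar]

end FermionMode

namespace Matrix

variable {n R : Type*} [Fintype n]

theorem trace_commutator_mul [CommRing R] (A B C : Matrix n n R) :
    ((A * B - B * A) * C).trace = (B * (C * A - A * C)).trace := by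
  rw [sub_mul, mul_sub, trace_sub, trace_sub, mul_assoc, trace_mul_comm, mul_assoc, mul_assoc]

theorem trace_mul_conjTranspose_of_isHermitian [CommRing R] [StarRing R] {A : Matrix n n R}
    (hA : A.IsHermitian) (B : Matrix n n R) : (A * Bᴴ).trace = star (A * B).trace := by
  rw [← hA.eq, ← conjTranspose_mul, trace_conjTranspose, hA.eq, trace_mul_comm]

theorem PosSemidef.trace_mul_nonneg_of_isStarProjection [CommRing R] [PartialOrder R] [StarRing R]
    [StarOrderedRing R] {A P : Matrix n n R} (hA : A.PosSemidef) (hP : IsStarProjection P) :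
    0 ≤ (A * P).trace := by
  have h := (hA.conjTranspose_mul_mul_same P).trace_nonneg
  rwa [hP.isSelfAdjoint.isHermitian.eq, trace_mul_comm, ← mul_assoc, hP.isIdempotentElem.eq,
    trace_mul_comm] at h

end Matrix

theorem IsDensityMatrix.trace_mul_mem_Icc {d P : M4} (hd : IsDensityMatrix d)
    (hP : IsStarProjection P) : 0 ≤ (d * P).trace ∧ (d * P).trace ≤ 1 := by
  refine ⟨hd.2.1.trace_mul_nonneg_of_isStarProjection hP, ?_⟩
  have h := hd.2.1.trace_mul_nonneg_of_isStarProjection hP.one_sub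
  rwa [mul_sub, mul_one, trace_sub, hd.2.2, sub_nonneg] at h

theorem HasDerivAt.trace_mul_right {d : ℝ → M4} {d' : M4} {t : ℝ} (hd : HasDerivAt d d' t)
    (N : M4) : HasDerivAt (fun s ↦ (d s * N).trace) (d' * N).trace t :=
  (traceLinearMap (Fin 4) ℝ ℂ ∘ₗ LinearMap.mulRight ℝ N).toContinuousLinearMap.hasFDerivAt
    |>.comp_hasDerivAt t hd

namespace CAR

variable {a b : M4}

theorem mul_self_left (hc : CAR a b) : a * a = 0 := eq_zero_of_add_self_eq_zero ℂ hc.1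

theorem mul_self_right (hc : CAR a b) : b * b = 0 := eq_zero_of_add_self_eq_zero ℂ hc.2.2.1

theorem number_left_mul_conjTranspose (hc : CAR a b) : aᴴ * a * aᴴ = aᴴ :=
  star_mul_self_mul_star hc.mul_self_left hc.2.2.2.1

theorem number_right_mul_conjTranspose (hc : CAR a b) : bᴴ * b * bᴴ = bᴴ :=
  star_mul_self_mul_star hc.mul_self_right hc.2.2.2.2.2.2

theorem conjTranspose_mul_number_left (hc : CAR a b) : aᴴ * (aᴴ * a) = 0 :=
  star_mul_star_mul_self_eq_zero hc.mul_self_left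

theorem isStarProjection_number_left (hc : CAR a b) : IsStarProjection (aᴴ * a) :=
  isStarProjection_star_mul_self hc.mul_self_left hc.2.2.2.1

theorem isStarProjection_number_right (hc : CAR a b) : IsStarProjection (bᴴ * b) :=
  isStarProjection_star_mul_self hc.mul_self_right hc.2.2.2.2.2.2

theorem conjTranspose_anticomm (hc : CAR a b) : aᴴ * bᴴ + bᴴ * aᴴ = 0 := by
  rw [add_comm, ← conjTranspose_mul, ← conjTranspose_mul, ← conjTranspose_add, hc.2.1,
    conjTranspose_zero]

theorem commute_conjTranspose_left_number_right (hc : CAR a b) : Commute aᴴ (bᴴ * b) :=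
  commute_mul_of_anticommute hc.conjTranspose_anticomm (by rw [add_comm]; exact hc.2.2.2.2.2.1)

theorem commute_left_number_right (hc : CAR a b) : Commute a (bᴴ * b) :=
  commute_mul_of_anticommute hc.2.2.2.2.1 hc.2.1

theorem commute_conjTranspose_right_number_left (hc : CAR a b) : Commute bᴴ (aᴴ * a) :=
  commute_mul_of_anticommute (by rw [add_comm]; exact hc.conjTranspose_anticomm)
    (by rw [add_comm]; exact hc.2.2.2.2.1)

theorem commute_numbers (hc : CAR a b) : Commute (aᴴ * a) (bᴴ * b) :=
  hc.commute_conjTranspose_left_number_right.mul_left hc.commute_left_number_right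

theorem isStarProjection_doubleOccupancy (hc : CAR a b) :
    IsStarProjection (aᴴ * a * (bᴴ * b)) :=
  hc.isStarProjection_number_left.mul hc.isStarProjection_number_right hc.commute_numbers

theorem doubleOccupancy_mul_pairCreation (hc : CAR a b) :
    aᴴ * a * (bᴴ * b) * (aᴴ * bᴴ) = aᴴ * bᴴ := by
  rw [hc.commute_conjTranspose_left_number_right.symm.mul_mul_mul_comm,
    hc.number_left_mul_conjTranspose, hc.number_right_mul_conjTranspose]

theorem pairCreation_mul_doubleOccupancy (hc : CAR a b) :
    aᴴ * bᴴ * (aᴴ * a * (bᴴ * b)) = 0 := by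
  rw [hc.commute_conjTranspose_right_number_left.mul_mul_mul_comm,
    hc.conjTranspose_mul_number_left, zero_mul]

theorem doubleOccupancy_mul_pairAnnihilation (hc : CAR a b) :
    aᴴ * a * (bᴴ * b) * (b * a) = 0 := by
  simpa only [conjTranspose_mul, conjTranspose_conjTranspose, conjTranspose_zero,
    hc.isStarProjection_doubleOccupancy.isSelfAdjoint.isHermitian.eq]
    using congrArg conjTranspose hc.pairCreation_mul_doubleOccupancy

theorem pairAnnihilation_mul_doubleOccupancy (hc : CAR a b) :
    b * a * (aᴴ * a * (bᴴ * b)) = b * a := by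
  simpa only [conjTranspose_mul, conjTranspose_conjTranspose,
    hc.isStarProjection_doubleOccupancy.isSelfAdjoint.isHermitian.eq]
    using congrArg conjTranspose hc.doubleOccupancy_mul_pairCreation

theorem doubleOccupancy_commutator_dh (hc : CAR a b) (mu h lam gam : ℝ) (c : ℂ) :
    aᴴ * a * (bᴴ * b) * dh a b mu h lam gam c - dh a b mu h lam gam c * (aᴴ * a * (bᴴ * b))
      = (gam : ℂ) • ((starRingEnd ℂ) c • (b * a) - c • (aᴴ * bᴴ)) := by
  have hNa : Commute (aᴴ * a * (bᴴ * b)) (aᴴ * a) :=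
    (Commute.refl _).mul_left hc.commute_numbers.symm
  have hNb : Commute (aᴴ * a * (bᴴ * b)) (bᴴ * b) := hc.commute_numbers.mul_left (.refl _)
  simp only [dh, mul_sub, sub_mul, mul_add, add_mul, mul_smul_comm, smul_mul_assoc, hNa.eq,
    hNb.eq, hc.doubleOccupancy_mul_pairCreation, hc.pairCreation_mul_doubleOccupancy,
    hc.doubleOccupancy_mul_pairAnnihilation, hc.pairAnnihilation_mul_doubleOccupancy]
  module

theorem trace_mul_doubleOccupancy_commutator_dh_eq_zero (hc : CAR a b) {d : M4}
    (hd : d.IsHermitian) (mu h lam gam : ℝ) :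
    (d * (aᴴ * a * (bᴴ * b) * dh a b mu h lam gam (d * (b * a)).trace
      - dh a b mu h lam gam (d * (b * a)).trace * (aᴴ * a * (bᴴ * b)))).trace = 0 := by
  rw [hc.doubleOccupancy_commutator_dh, ← conjTranspose_mul]
  simp only [mul_smul_comm, mul_sub, trace_smul, trace_sub,
    trace_mul_conjTranspose_of_isHermitian hd, starRingEnd_apply, smul_eq_mul]
  ring

end CAR

theorem SelfConsistent.trace_mul_doubleOccupancy_eq {a b : M4} (hc : CAR a b)
    {mu h lam gam : ℝ} {d : ℝ → M4} (hd : SelfConsistent a b mu h lam gam d) (t s : ℝ) :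
    (d t * (aᴴ * a * (bᴴ * b))).trace = (d s * (aᴴ * a * (bᴴ * b))).trace := by
  have hderiv (t : ℝ) : HasDerivAt (fun s ↦ (d s * (aᴴ * a * (bᴴ * b))).trace) 0 t := by
    convert (hd.2 t).trace_mul_right (aᴴ * a * (bᴴ * b)) using 1
    rw [smul_mul_assoc, trace_smul, trace_commutator_mul,
      hc.trace_mul_doubleOccupancy_commutator_dh_eq_zero (hd.1 t).1, smul_zero]
  exact is_const_of_deriv_eq_zero (fun t ↦ (hderiv t).differentiableAt) (fun t ↦ (hderiv t).deriv)
    t s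

theorem coulomb_correlation_conserved_general (Aup Adn : M4) (hCAR : CAR Aup Adn)
    (mu h lam gam : ℝ)
    (d : ℝ → M4) (hd : SelfConsistent Aup Adn mu h lam gam d) :
    ∃ r : ℝ, (0 : ℝ) ≤ r ∧ r ≤ 1 ∧
      ∀ t : ℝ, (d t * (Aupᴴ * Aup * (Adnᴴ * Adn))).trace = (r : ℂ) := by
  obtain ⟨h0, h1⟩ := (hd.1 0).trace_mul_mem_Icc hCAR.isStarProjection_doubleOccupancy
  obtain ⟨r, hr0, hr⟩ := RCLike.nonneg_iff_exists_ofReal.mp h0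
  refine ⟨r, hr0, ?_, fun t ↦ (hd.trace_mul_doubleOccupancy_eq hCAR t 0).trans hr.symm⟩
  rwa [← hr, ← RCLike.ofReal_one, RCLike.ofReal_le_ofReal] at h1

/-- along a self-consistent trajectory the quantity is
independent of `t`, real, and lies in `[0,1]`. -/
theorem coulomb_correlation_conserved (Aup Adn : M4) (hCAR : CAR Aup Adn)
    (mu h lam gam : ℝ) (hgam : 0 ≤ gam)
    (d : ℝ → M4) (hd : SelfConsistent Aup Adn mu h lam gam d) :
    ∃ r : ℝ, (0 : ℝ) ≤ r ∧ r ≤ 1 ∧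
      ∀ t : ℝ, (d t * (Aupᴴ * Aup * (Adnᴴ * Adn))).trace = (r : ℂ) :=
  coulomb_correlation_conserved_general Aup Adn hCAR mu h lam gam d hd
end
end

section
/- Interference formula for the Cooper-field density of mixtures: let n ≥ 1, let u₁,…,uₙ ∈ [0,1] with u₁+⋯+uₙ = 1, and let d₁,…,dₙ : ℝ → M₄(ℂ) be self-consistent trajectories. For each j set ν_j := 2(μ−λ) + γ·(1 − Re Tr(d_j(0)·(n↑+n↓))). Then for every t ∈ ℝ: Σ_{j=1}^{n} u_j·Tr(d_j(t)·A↓A↑) = Σ_{j=1}^{n} u_j·Tr(d_j(0)·A↓A↑)·exp(i·t·ν_j). -/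
open Matrix
open scoped ComplexOrder

noncomputable section

/-!
Write `α(t) = Tr(d(t)·A↓A↑)` and `N(t) = Tr(d(t)·(n↑+n↓))`. Along a trajectory
`Tr(d·X)' = -i·Tr(d·[X, dh])`. Normal ordering with the CAR gives
`[n↑+n↓, dh(c)] = 2γ(c̄·A↓A↑ - c·A↑*A↓*)`, whose expectation vanishes at the self-consistent
value `c = α` because `Tr(d·A↑*A↓*) = ᾱ`; so `N` is conserved. Likewise
`[A↓A↑, dh(c)] = 2(λ-μ)·A↓A↑ - γc·(1 - n↑ - n↓)`, so with `Tr d = 1` the Cooper field obeys the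
linear equation `α' = iνα` with the constant frequency `ν = 2(μ-λ) + γ(1 - N)`, whence
`α(t) = α(0)·e^{iνt}` for each component of the mixture.
-/

theorem Matrix.trace_commutator_mul_s13 {n R : Type*} [Fintype n] [CommRing R]
    (H d X : Matrix n n R) :
    ((H * d - d * H) * X).trace = (d * (X * H - H * X)).trace := by
  rw [sub_mul, mul_sub, trace_sub, trace_sub, mul_assoc, trace_mul_comm H, mul_assoc, mul_assoc]

theorem Matrix.IsHermitian.trace_mul_conjTranspose {n R : Type*} [Fintype n] [CommRing R]
    [StarRing R] {d : Matrix n n R} (hd : d.IsHermitian) (X : Matrix n n R) :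
    (d * Xᴴ).trace = star (d * X).trace := by
  rw [← trace_conjTranspose, conjTranspose_mul, hd.eq, trace_mul_comm]

theorem Matrix.IsHermitian.ofReal_re_trace_mul {n : Type*} [Fintype n] {d X : Matrix n n ℂ}
    (hd : d.IsHermitian) (hX : X.IsHermitian) :
    (((d * X).trace.re : ℝ) : ℂ) = (d * X).trace := by
  rw [← Complex.conj_eq_iff_re, ← Complex.star_def, ← hd.trace_mul_conjTranspose, hX.eq]

theorem eq_mul_cexp_of_hasDerivAt {f : ℝ → ℂ} {k : ℂ} (hf : ∀ t, HasDerivAt f (k * f t) t)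
    (t : ℝ) : f t = f 0 * Complex.exp (k * t) := by
  have hg : ∀ s : ℝ, HasDerivAt (fun s : ℝ => f s * Complex.exp (-k * s)) 0 s := fun s =>
    ((hf s).mul (((hasDerivAt_id (s : ℂ)).const_mul (-k)).cexp.comp_ofReal)).congr_deriv
      (by simp only [id]; ring)
  have hconst : f t * Complex.exp (-k * t) = f 0 := by
    simpa using is_const_of_deriv_eq_zero (fun s => (hg s).differentiableAt)
      (fun s => (hg s).deriv) t 0
  rw [← hconst, mul_assoc, ← Complex.exp_add, neg_mul, neg_add_cancel, Complex.exp_zero, mul_one]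

namespace CAR

variable {Aup Adn : M4}

theorem up_mul_up (H : CAR Aup Adn) : Aup * Aup = 0 :=
  (smul_eq_zero.mp ((two_smul ℂ _).trans H.1)).resolve_left two_ne_zero

theorem dn_mul_dn (H : CAR Aup Adn) : Adn * Adn = 0 :=
  (smul_eq_zero.mp ((two_smul ℂ _).trans H.2.2.1)).resolve_left two_ne_zero

variable (x : M4)

theorem up_mul_up_mul (H : CAR Aup Adn) : Aup * (Aup * x) = 0 := by
  rw [← mul_assoc, H.up_mul_up, zero_mul]

theorem dn_mul_dn_mul (H : CAR Aup Adn) : Adn * (Adn * x) = 0 := by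
  rw [← mul_assoc, H.dn_mul_dn, zero_mul]

theorem dn_mul_up_mul (H : CAR Aup Adn) : Adn * (Aup * x) = -(Aup * (Adn * x)) := by
  rw [← mul_assoc, eq_neg_of_add_eq_zero_right H.2.1, neg_mul, mul_assoc]

theorem up_mul_star_up_mul (H : CAR Aup Adn) : Aup * (Aupᴴ * x) = x - Aupᴴ * (Aup * x) := by
  rw [← mul_assoc, eq_sub_of_add_eq H.2.2.2.1, sub_mul, one_mul, mul_assoc]

theorem up_mul_star_dn_mul (H : CAR Aup Adn) : Aup * (Adnᴴ * x) = -(Adnᴴ * (Aup * x)) := by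
  rw [← mul_assoc, eq_neg_of_add_eq_zero_left H.2.2.2.2.1, neg_mul, mul_assoc]

theorem dn_mul_star_up_mul (H : CAR Aup Adn) : Adn * (Aupᴴ * x) = -(Aupᴴ * (Adn * x)) := by
  rw [← mul_assoc, eq_neg_of_add_eq_zero_left H.2.2.2.2.2.1, neg_mul, mul_assoc]

theorem dn_mul_star_dn_mul (H : CAR Aup Adn) : Adn * (Adnᴴ * x) = x - Adnᴴ * (Adn * x) := by
  rw [← mul_assoc, eq_sub_of_add_eq H.2.2.2.2.2.2, sub_mul, one_mul, mul_assoc]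

theorem star_up_mul_star_up_mul (H : CAR Aup Adn) : Aupᴴ * (Aupᴴ * x) = 0 := by
  rw [← mul_assoc, ← conjTranspose_mul, H.up_mul_up, conjTranspose_zero, zero_mul]

theorem star_dn_mul_star_dn_mul (H : CAR Aup Adn) : Adnᴴ * (Adnᴴ * x) = 0 := by
  rw [← mul_assoc, ← conjTranspose_mul, H.dn_mul_dn, conjTranspose_zero, zero_mul]

theorem star_dn_mul_star_up_mul (H : CAR Aup Adn) :
    Adnᴴ * (Aupᴴ * x) = -(Aupᴴ * (Adnᴴ * x)) := by
  rw [← mul_assoc, ← conjTranspose_mul, eq_neg_of_add_eq_zero_left H.2.1, conjTranspose_neg,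
    conjTranspose_mul, neg_mul, mul_assoc]

variable (mu h lam gam : ℝ) (c : ℂ)

theorem number_mul_dh_sub_dh_mul_number (H : CAR Aup Adn) :
    (Aupᴴ * Aup + Adnᴴ * Adn) * dh Aup Adn mu h lam gam c
      - dh Aup Adn mu h lam gam c * (Aupᴴ * Aup + Adnᴴ * Adn)
      = (2 * gam * starRingEnd ℂ c) • (Adn * Aup) - (2 * gam * c) • (Aupᴴ * Adnᴴ) := by
  -- after right multiplication by an arbitrary `y` every monomial ends in `y`, so the CAR are
  -- needed only in the form `a * (b * y)`
  suffices ∀ y : M4, (Aupᴴ * Aup + Adnᴴ * Adn) * dh Aup Adn mu h lam gam c * y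
      - dh Aup Adn mu h lam gam c * (Aupᴴ * Aup + Adnᴴ * Adn) * y
      = (2 * gam * starRingEnd ℂ c) • (Adn * Aup * y) - (2 * gam * c) • (Aupᴴ * Adnᴴ * y) by
    simpa using this 1
  intro y
  simp only [dh, mul_assoc, smul_mul_assoc, mul_smul_comm, sub_mul, mul_sub, add_mul, mul_add,
    neg_mul, mul_neg, smul_sub, smul_add, smul_neg, smul_smul, H.up_mul_up_mul, H.dn_mul_dn_mul,
    H.dn_mul_up_mul, H.up_mul_star_up_mul, H.up_mul_star_dn_mul, H.dn_mul_star_up_mul,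
    H.dn_mul_star_dn_mul, H.star_up_mul_star_up_mul, H.star_dn_mul_star_dn_mul,
    H.star_dn_mul_star_up_mul, zero_mul, mul_zero, smul_zero, neg_neg, sub_zero, neg_zero]
  module

theorem pair_mul_dh_sub_dh_mul_pair (H : CAR Aup Adn) :
    (Adn * Aup) * dh Aup Adn mu h lam gam c - dh Aup Adn mu h lam gam c * (Adn * Aup)
      = (2 * (lam - mu) : ℂ) • (Adn * Aup) - (gam * c) • (1 - Aupᴴ * Aup - Adnᴴ * Adn) := by
  suffices ∀ y : M4, (Adn * Aup) * dh Aup Adn mu h lam gam c * y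
      - dh Aup Adn mu h lam gam c * (Adn * Aup) * y
      = (2 * (lam - mu) : ℂ) • (Adn * Aup * y) - (gam * c) • ((1 - Aupᴴ * Aup - Adnᴴ * Adn) * y) by
    simpa using this 1
  intro y
  simp only [dh, mul_assoc, smul_mul_assoc, mul_smul_comm, sub_mul, mul_sub, add_mul, mul_add,
    neg_mul, mul_neg, smul_sub, smul_add, smul_neg, smul_smul, H.up_mul_up_mul, H.dn_mul_dn_mul,
    H.dn_mul_up_mul, H.up_mul_star_up_mul, H.up_mul_star_dn_mul, H.dn_mul_star_up_mul,
    H.dn_mul_star_dn_mul, zero_mul, one_mul, mul_zero, smul_zero, neg_neg, sub_zero, neg_zero]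
  module

end CAR

namespace SelfConsistent

variable {Aup Adn : M4} {mu h lam gam : ℝ} {d : ℝ → M4}

theorem hasDerivAt_trace_mul (hd : SelfConsistent Aup Adn mu h lam gam d) (X : M4) (t : ℝ) :
    HasDerivAt (fun s => (d s * X).trace)
      (-Complex.I * (d t * (X * dh Aup Adn mu h lam gam (d t * (Adn * Aup)).trace
        - dh Aup Adn mu h lam gam (d t * (Adn * Aup)).trace * X)).trace) t := by
  let L : M4 →L[ℝ] ℂ := LinearMap.toContinuousLinearMap
    (((traceLinearMap (Fin 4) ℂ ℂ).comp (LinearMap.mulRight ℂ X)).restrictScalars ℝ)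
  refine (L.hasFDerivAt.comp_hasDerivAt t (hd.2 t)).congr_deriv ?_
  change ((-Complex.I • _) * X).trace = _
  rw [smul_mul_assoc, trace_smul, trace_commutator_mul_s13, smul_eq_mul]

theorem trace_mul_number_eq (hCAR : CAR Aup Adn) (hd : SelfConsistent Aup Adn mu h lam gam d)
    (t : ℝ) :
    (d t * (Aupᴴ * Aup + Adnᴴ * Adn)).trace = (d 0 * (Aupᴴ * Aup + Adnᴴ * Adn)).trace := by
  have hderiv (s : ℝ) : HasDerivAt (fun s => (d s * (Aupᴴ * Aup + Adnᴴ * Adn)).trace) 0 s := by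
    refine (hd.hasDerivAt_trace_mul _ s).congr_deriv ?_
    rw [hCAR.number_mul_dh_sub_dh_mul_number, mul_sub, mul_smul_comm, mul_smul_comm, trace_sub,
      trace_smul, trace_smul, ← conjTranspose_mul, (hd.1 s).1.trace_mul_conjTranspose]
    simp only [smul_eq_mul, Complex.star_def]
    ring
  exact is_const_of_deriv_eq_zero (fun s => (hderiv s).differentiableAt)
    (fun s => (hderiv s).deriv) t 0

theorem hasDerivAt_trace_mul_pair (hCAR : CAR Aup Adn)
    (hd : SelfConsistent Aup Adn mu h lam gam d) (t : ℝ) :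
    HasDerivAt (fun s => (d s * (Adn * Aup)).trace)
      (Complex.I * ((2 * (mu - lam)
          + gam * (1 - ((d 0 * (Aupᴴ * Aup + Adnᴴ * Adn)).trace).re) : ℝ) : ℂ)
        * (d t * (Adn * Aup)).trace) t := by
  have hN : (Aupᴴ * Aup + Adnᴴ * Adn).IsHermitian :=
    (isHermitian_conjTranspose_mul_self Aup).add (isHermitian_conjTranspose_mul_self Adn)
  refine (hd.hasDerivAt_trace_mul _ t).congr_deriv ?_
  rw [hCAR.pair_mul_dh_sub_dh_mul_pair, sub_sub]
  simp only [mul_sub, mul_smul_comm, mul_one, trace_sub, trace_smul, (hd.1 t).2.2, smul_eq_mul]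
  push_cast
  rw [(hd.1 0).1.ofReal_re_trace_mul hN, ← hd.trace_mul_number_eq hCAR t]
  ring

theorem trace_mul_pair_eq (hCAR : CAR Aup Adn) (hd : SelfConsistent Aup Adn mu h lam gam d)
    (t : ℝ) :
    (d t * (Adn * Aup)).trace
      = (d 0 * (Adn * Aup)).trace *
          Complex.exp (Complex.I * (t : ℂ) *
            ((2 * (mu - lam)
              + gam * (1 - ((d 0 * (Aupᴴ * Aup + Adnᴴ * Adn)).trace).re) : ℝ) : ℂ)) := by
  rw [eq_mul_cexp_of_hasDerivAt (hd.hasDerivAt_trace_mul_pair hCAR) t, mul_right_comm Complex.I]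

end SelfConsistent

theorem interference_formula_general (Aup Adn : M4) (hCAR : CAR Aup Adn)
    (mu h lam gam : ℝ)
    (n : ℕ)
    (u : Fin n → ℝ)
    (d : Fin n → ℝ → M4)
    (hd : ∀ j, SelfConsistent Aup Adn mu h lam gam (d j)) :
    ∀ t : ℝ,
      ∑ j, (u j : ℂ) * (d j t * (Adn * Aup)).trace
        = ∑ j, (u j : ℂ) * (d j 0 * (Adn * Aup)).trace *
            Complex.exp (Complex.I * (t : ℂ) *
              ((2 * (mu - lam)
                + gam * (1 - ((d j 0 * (Aupᴴ * Aup + Adnᴴ * Adn)).trace).re) : ℝ) : ℂ)) := by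
  intro t
  refine Finset.sum_congr rfl fun j _ => ?_
  rw [(hd j).trace_mul_pair_eq hCAR t]
  exact (mul_assoc _ _ _).symm

/-- interference formula for the Cooper-field density of mixtures:
`Σⱼ uⱼ·Tr(dⱼ(t)·A↓A↑) = Σⱼ uⱼ·Tr(dⱼ(0)·A↓A↑)·exp(i·t·νⱼ)` with
`νⱼ = 2(μ−λ) + γ·(1 − Re Tr(dⱼ(0)·(n↑+n↓)))`. -/
theorem interference_formula (Aup Adn : M4) (hCAR : CAR Aup Adn)
    (mu h lam gam : ℝ) (hgam : 0 ≤ gam)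
    (n : ℕ) (hn : 1 ≤ n)
    (u : Fin n → ℝ) (hu : ∀ j, u j ∈ Set.Icc (0 : ℝ) 1) (hsum : ∑ j, u j = 1)
    (d : Fin n → ℝ → M4)
    (hd : ∀ j, SelfConsistent Aup Adn mu h lam gam (d j)) :
    ∀ t : ℝ,
      ∑ j, (u j : ℂ) * (d j t * (Adn * Aup)).trace
        = ∑ j, (u j : ℂ) * (d j 0 * (Adn * Aup)).trace *
            Complex.exp (Complex.I * (t : ℂ) *
              ((2 * (mu - lam)
                + gam * (1 - ((d j 0 * (Aupᴴ * Aup + Adnᴴ * Adn)).trace).re) : ℝ) : ℂ)) :=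
  interference_formula_general Aup Adn hCAR mu h lam gam n u d hd
end
end
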